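/- For every integer n ≥ 4, the three-element set S = {K_1, K_1 k_2, K_2 k_1} (the single-king position with K on square 1, and the two two-king positions with the kings on squares 1 and 2) resolves the opposing-kings game digraph G(K(1,n)) with respect to signed distance. -/

import Mathlib

/-- `StepsTo R m u v` : there is a directed walk of length `m` from `u` to `v`. -/
def StepsTo {V : Type*} (R : V → V → Prop) : ℕ → V → V → Prop
  | 0 => fun u v => u = v
  | (m + 1) => fun u v => ∃ w, R u w ∧ StepsTo R m w v

/-- Directed distance: length of a shortest directed path (`⊤` = ∞ if none exists). -/
noncomputable def ddist {V : Type*} (R : V → V → Prop) (u v : V) : ℕ∞ :=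
  sInf ((fun m : ℕ => (m : ℕ∞)) '' {m : ℕ | StepsTo R m u v})

/-- Signed distance `d±(u,v)`: `d(u,v)` if a `u→v` path exists and `d(u,v) ≤ d(v,u)`;
`-d(v,u)` if a `v→u` path exists and `d(v,u) < d(u,v)`; `⊤` if neither path exists. -/
noncomputable def sdist {V : Type*} (R : V → V → Prop) (u v : V) : WithTop ℤ :=
  if ddist R u v ≤ ddist R v u then (ddist R u v).map (fun m : ℕ => (m : ℤ))
  else (ddist R v u).map (fun m : ℕ => (-(m : ℤ)))

/-- `S` resolves the digraph with arc relation `R` (w.r.t. signed distance). -/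
def Resolves {V : Type*} (R : V → V → Prop) (S : Set V) : Prop :=
  ∀ u v : V, (∀ s ∈ S, sdist R s u = sdist R s v) → u = v

/-- Metric dimension of the digraph with arc relation `R` (w.r.t. signed distance). -/
noncomputable def metricDim {V : Type*} (R : V → V → Prop) : ℕ :=
  sInf {k : ℕ | ∃ S : Finset V, S.card = k ∧ Resolves R ↑S}

/-- A position of the opposing-kings game on a `1 × n` strip: both kings on the board
(white king `K` on square `i`, black king `k` on square `j`), or only one king left. -/
inductive KingPos (n : ℕ) : Type
  | both : Fin n → Fin n → KingPos n
  | onlyK : Fin n → KingPos n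
  | onlyk : Fin n → KingPos n
deriving DecidableEq

/-- A position is valid when the two kings occupy distinct squares. -/
def KingPos.valid {n : ℕ} : KingPos n → Prop
  | .both i j => i ≠ j
  | .onlyK _ => True
  | .onlyk _ => True

/-- Two squares of the strip are adjacent (a king move). -/
def adjSq {n : ℕ} (i j : Fin n) : Prop := i.val + 1 = j.val ∨ j.val + 1 = i.val

/-- A move in the opposing-kings game on a `1 × n` strip: either king steps to an
adjacent square not occupied by the other king, and when the kings are adjacent either
one may capture the other (leaving a single king on the captured square). A lone king
moves to an adjacent square. -/
def KingMove {n : ℕ} : KingPos n → KingPos n → Prop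
  | .both i j, .both i2 j2 =>
      (adjSq i i2 ∧ j = j2 ∧ i2 ≠ j) ∨ (i = i2 ∧ adjSq j j2 ∧ j2 ≠ i)
  | .both i j, .onlyK m => adjSq i j ∧ m = j
  | .both i j, .onlyk m => adjSq i j ∧ m = i
  | .onlyK i, .onlyK i2 => adjSq i i2
  | .onlyk j, .onlyk j2 => adjSq j j2
  | _, _ => False

/-- Vertices of `G(K(1,n))`: the valid positions. -/
def KingV (n : ℕ) : Type := {p : KingPos n // p.valid}

/-- The arc relation of the game digraph `G(K(1,n))`. -/
def kingR (n : ℕ) (u v : KingV n) : Prop := KingMove u.1 v.1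


section generic
variable {V : Type*} {R : V → V → Prop}

lemma stepsTo_congr {m m' : ℕ} {u v : V} (h : StepsTo R m u v) (e : m = m') :
    StepsTo R m' u v := e ▸ h

lemma stepsTo_trans : ∀ {m k : ℕ} {u v w : V},
    StepsTo R m u v → StepsTo R k v w → StepsTo R (m + k) u w := by
  intro m
  induction m with
  | zero => intro k u v w h1 h2; cases h1; simpa using h2
  | succ m ih =>
    intro k u v w h1 h2
    obtain ⟨x, hx, hrest⟩ := h1
    have : StepsTo R (m + k + 1) u w := ⟨x, hx, ih hrest h2⟩
    exact stepsTo_congr this (by omega)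

lemma stepsTo_one {u v : V} (h : R u v) : StepsTo R 1 u v := ⟨v, h, rfl⟩

lemma pot_forward (ψ : V → ℕ∞) (h : ∀ u v, R u v → ψ v ≤ ψ u + 1) :
    ∀ {m : ℕ} {u v : V}, StepsTo R m u v → ψ v ≤ ψ u + m := by
  intro m
  induction m with
  | zero => intro u v h1; cases h1; simp
  | succ m ih =>
    intro u v h1
    obtain ⟨x, hx, hrest⟩ := h1
    calc ψ v ≤ ψ x + m := ih hrest
    _ ≤ (ψ u + 1) + m := by gcongr; exact h _ _ hx
    _ = ψ u + (m + 1 : ℕ) := by push_cast; ring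

lemma pot_back (φ : V → ℕ∞) (h : ∀ u v, R u v → φ u ≤ φ v + 1) :
    ∀ {m : ℕ} {u v : V}, StepsTo R m u v → φ u ≤ φ v + m := by
  intro m
  induction m with
  | zero => intro u v h1; cases h1; simp
  | succ m ih =>
    intro u v h1
    obtain ⟨x, hx, hrest⟩ := h1
    calc φ u ≤ φ x + 1 := h _ _ hx
    _ ≤ (φ v + m) + 1 := by gcongr; exact ih hrest
    _ = φ v + (m + 1 : ℕ) := by push_cast; ring

lemma ddist_le {u v : V} {m : ℕ} (h : StepsTo R m u v) : ddist R u v ≤ m :=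
  sInf_le ⟨m, h, rfl⟩

lemma le_ddist {u v : V} {c : ℕ∞} (h : ∀ m : ℕ, StepsTo R m u v → c ≤ m) :
    c ≤ ddist R u v := le_sInf (by rintro x ⟨m, hm, rfl⟩; exact h m hm)

lemma ddist_eq_top {u v : V} (h : ∀ m : ℕ, ¬ StepsTo R m u v) : ddist R u v = ⊤ := by
  refine le_antisymm le_top (le_ddist fun m hm => absurd hm (h m))

lemma ddist_eq {u v : V} {c : ℕ} (h1 : StepsTo R c u v)
    (h2 : ∀ m : ℕ, StepsTo R m u v → (c : ℕ∞) ≤ m) : ddist R u v = c :=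
  le_antisymm (ddist_le h1) (le_ddist h2)

lemma forward_bound (ψ : V → ℕ∞) (h : ∀ u v, R u v → ψ v ≤ ψ u + 1)
    {u v : V} (hu : ψ u = 0) : ψ v ≤ ddist R u v :=
  le_ddist fun m hm => by simpa [hu] using pot_forward ψ h hm

lemma back_bound (φ : V → ℕ∞) (h : ∀ u v, R u v → φ u ≤ φ v + 1)
    {u v : V} (hv : φ v = 0) : φ u ≤ ddist R u v :=
  le_ddist fun m hm => by simpa [hv] using pot_back φ h hm

lemma ddist_top_fwd (ψ : V → ℕ∞) (h : ∀ u v, R u v → ψ v ≤ ψ u + 1)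
    {u v : V} (hu : ψ u ≠ ⊤) (hv : ψ v = ⊤) : ddist R u v = ⊤ := by
  apply ddist_eq_top
  intro m hm
  have h2 := pot_forward ψ h hm
  rw [hv, top_le_iff] at h2
  rcases WithTop.add_eq_top.mp h2 with h3 | h3
  · exact hu h3
  · exact (ENat.coe_ne_top m) h3

lemma ddist_top_back (φ : V → ℕ∞) (h : ∀ u v, R u v → φ u ≤ φ v + 1)
    {u v : V} (hu : φ u = ⊤) (hv : φ v ≠ ⊤) : ddist R u v = ⊤ := by
  apply ddist_eq_top
  intro m hm
  have h2 := pot_back φ h hm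
  rw [hu, top_le_iff] at h2
  rcases WithTop.add_eq_top.mp h2 with h3 | h3
  · exact hv h3
  · exact (ENat.coe_ne_top m) h3

lemma sdist_coe' {u v : V} {a : ℕ} (h1 : ddist R u v = a)
    (h2 : (a : ℕ∞) ≤ ddist R v u) : sdist R u v = ((a : ℤ) : WithTop ℤ) := by
  rw [sdist, h1, if_pos h2]
  rfl

lemma sdist_neg' {u v : V} {a : ℕ} (h1 : ddist R u v = ⊤) (h2 : ddist R v u = a) :
    sdist R u v = ((-(a : ℤ) : ℤ) : WithTop ℤ) := by
  rw [sdist, h1, h2, if_neg (by simp)]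
  rfl

lemma sdist_top' {u v : V} (h1 : ddist R u v = ⊤) (h2 : ddist R v u = ⊤) :
    sdist R u v = ⊤ := by
  rw [sdist, h1, h2, if_pos le_rfl]
  rfl

end generic

namespace KingAux
variable {n : ℕ}

/-- ψ1 : forward potential from K₁ -/
def p1f : KingPos n → ℕ∞
  | .onlyK m => (m.val : ℕ∞)
  | .onlyk _ => ⊤
  | .both _ _ => ⊤

/-- φ1 : backward potential to K₁ -/
def p1b : KingPos n → ℕ∞
  | .onlyK m => (m.val : ℕ∞)
  | .onlyk _ => ⊤
  | .both i j => if i.val < j.val then ((j.val + 1 : ℕ) : ℕ∞) else (i.val : ℕ∞)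

/-- ψ2 : forward potential from K₁k₂ -/
def p2f : KingPos n → ℕ∞
  | .onlyK m => (m.val : ℕ∞)
  | .onlyk m => ((m.val + 1 : ℕ) : ℕ∞)
  | .both i j => if i.val < j.val then ((i.val + j.val - 1 : ℕ) : ℕ∞) else ⊤

/-- φ2 : backward potential to K₁k₂ -/
def p2b : KingPos n → ℕ∞
  | .both i j => if i.val < j.val then ((i.val + j.val - 1 : ℕ) : ℕ∞) else ⊤
  | .onlyK _ => ⊤
  | .onlyk _ => ⊤

/-- ψ3 : forward potential from K₂k₁ -/
def p3f : KingPos n → ℕ∞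
  | .onlyK m => (m.val : ℕ∞)
  | .onlyk m => (m.val : ℕ∞)
  | .both i j => if j.val < i.val then ((i.val + j.val - 1 : ℕ) : ℕ∞) else ⊤

/-- φ3 : backward potential to K₂k₁ -/
def p3b : KingPos n → ℕ∞
  | .both i j => if j.val < i.val then ((i.val + j.val - 1 : ℕ) : ℕ∞) else ⊤
  | .onlyK _ => ⊤
  | .onlyk _ => ⊤

lemma cast_le_add_one {a b : ℕ} (h : a ≤ b + 1) : ((a : ℕ) : ℕ∞) ≤ (b : ℕ∞) + 1 := by
  exact_mod_cast h

lemma p1f_move : ∀ u v : KingV n, kingR n u v → p1f v.1 ≤ p1f u.1 + 1 := by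
  rintro ⟨pu, hu⟩ ⟨pv, hv⟩ h
  cases pu <;> cases pv <;>
    simp only [kingR, KingMove, KingPos.valid, adjSq, Fin.ext_iff, ne_eq] at h hu hv <;>
    simp only [p1f] <;>
    (try split_ifs) <;>
    first
      | exact h.elim
      | (simp; done)
      | exact cast_le_add_one (by omega)
      | (exfalso; omega)

lemma p1b_move : ∀ u v : KingV n, kingR n u v → p1b u.1 ≤ p1b v.1 + 1 := by
  rintro ⟨pu, hu⟩ ⟨pv, hv⟩ h
  cases pu <;> cases pv <;>
    simp only [kingR, KingMove, KingPos.valid, adjSq, Fin.ext_iff, ne_eq] at h hu hv <;>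
    simp only [p1b] <;>
    (try split_ifs) <;>
    first
      | exact h.elim
      | (simp; done)
      | exact cast_le_add_one (by omega)
      | (exfalso; omega)

lemma p2f_move : ∀ u v : KingV n, kingR n u v → p2f v.1 ≤ p2f u.1 + 1 := by
  rintro ⟨pu, hu⟩ ⟨pv, hv⟩ h
  cases pu <;> cases pv <;>
    simp only [kingR, KingMove, KingPos.valid, adjSq, Fin.ext_iff, ne_eq] at h hu hv <;>
    simp only [p2f] <;>
    (try split_ifs) <;>
    first
      | exact h.elim
      | (simp; done)
      | exact cast_le_add_one (by omega)
      | (exfalso; omega)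

lemma p2b_move : ∀ u v : KingV n, kingR n u v → p2b u.1 ≤ p2b v.1 + 1 := by
  rintro ⟨pu, hu⟩ ⟨pv, hv⟩ h
  cases pu <;> cases pv <;>
    simp only [kingR, KingMove, KingPos.valid, adjSq, Fin.ext_iff, ne_eq] at h hu hv <;>
    simp only [p2b] <;>
    (try split_ifs) <;>
    first
      | exact h.elim
      | (simp; done)
      | exact cast_le_add_one (by omega)
      | (exfalso; omega)

lemma p3f_move : ∀ u v : KingV n, kingR n u v → p3f v.1 ≤ p3f u.1 + 1 := by
  rintro ⟨pu, hu⟩ ⟨pv, hv⟩ h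
  cases pu <;> cases pv <;>
    simp only [kingR, KingMove, KingPos.valid, adjSq, Fin.ext_iff, ne_eq] at h hu hv <;>
    simp only [p3f] <;>
    (try split_ifs) <;>
    first
      | exact h.elim
      | (simp; done)
      | exact cast_le_add_one (by omega)
      | (exfalso; omega)

lemma p3b_move : ∀ u v : KingV n, kingR n u v → p3b u.1 ≤ p3b v.1 + 1 := by
  rintro ⟨pu, hu⟩ ⟨pv, hv⟩ h
  cases pu <;> cases pv <;>
    simp only [kingR, KingMove, KingPos.valid, adjSq, Fin.ext_iff, ne_eq] at h hu hv <;>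
    simp only [p3b] <;>
    (try split_ifs) <;>
    first
      | exact h.elim
      | (simp; done)
      | exact cast_le_add_one (by omega)
      | (exfalso; omega)

lemma walkK_up : ∀ (d : ℕ) (a b : Fin n), a.val + d = b.val →
    StepsTo (kingR n) d ⟨.onlyK a, trivial⟩ ⟨.onlyK b, trivial⟩ := by
  intro d
  induction d with
  | zero =>
    intro a b hab
    have : a = b := Fin.ext (by omega)
    subst this; rfl
  | succ d ih =>
    intro a b hab
    have hb := b.isLt
    refine ⟨⟨.onlyK ⟨a.val + 1, by omega⟩, trivial⟩, Or.inl rfl, ?_⟩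
    exact ih _ b (by show a.val + 1 + d = b.val; omega)

lemma walkK_down : ∀ (d : ℕ) (a b : Fin n), a.val = b.val + d →
    StepsTo (kingR n) d ⟨.onlyK a, trivial⟩ ⟨.onlyK b, trivial⟩ := by
  intro d
  induction d with
  | zero =>
    intro a b hab
    have : a = b := Fin.ext (by omega)
    subst this; rfl
  | succ d ih =>
    intro a b hab
    have ha := a.isLt
    refine ⟨⟨.onlyK ⟨a.val - 1, by omega⟩, trivial⟩, Or.inr (by show (a.val-1)+1 = a.val; omega), ?_⟩
    exact ih _ b (by show a.val - 1 = b.val + d; omega)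

lemma walkk_up : ∀ (d : ℕ) (a b : Fin n), a.val + d = b.val →
    StepsTo (kingR n) d ⟨.onlyk a, trivial⟩ ⟨.onlyk b, trivial⟩ := by
  intro d
  induction d with
  | zero =>
    intro a b hab
    have : a = b := Fin.ext (by omega)
    subst this; rfl
  | succ d ih =>
    intro a b hab
    have hb := b.isLt
    refine ⟨⟨.onlyk ⟨a.val + 1, by omega⟩, trivial⟩, Or.inl rfl, ?_⟩
    exact ih _ b (by show a.val + 1 + d = b.val; omega)

lemma walkB_K_up : ∀ (d : ℕ) (i i' j : Fin n) (hv : (KingPos.both i j).valid)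
    (hv' : (KingPos.both i' j).valid), i.val + d = i'.val →
    (i'.val < j.val ∨ j.val < i.val) →
    StepsTo (kingR n) d ⟨.both i j, hv⟩ ⟨.both i' j, hv'⟩ := by
  intro d
  induction d with
  | zero =>
    intro i i' j hv hv' he _
    have : i = i' := Fin.ext (by omega)
    subst this; rfl
  | succ d ih =>
    intro i i' j hv hv' he hside
    have hi' := i'.isLt
    have hvj : i.val ≠ j.val := fun h => hv (Fin.ext h)
    have hvj' : i'.val ≠ j.val := fun h => hv' (Fin.ext h)
    have hx : ((⟨i.val + 1, by omega⟩ : Fin n)) ≠ j := by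
      intro h
      have := congrArg Fin.val h
      simp at this; omega
    refine ⟨⟨.both ⟨i.val + 1, by omega⟩ j, hx⟩, Or.inl ⟨Or.inl rfl, rfl, hx⟩, ?_⟩
    refine ih _ i' j hx hv' (by show i.val + 1 + d = i'.val; omega) (by
      rcases hside with h | h
      · exact Or.inl h
      · exact Or.inr (by show j.val < i.val + 1; omega))

lemma walkB_K_down : ∀ (d : ℕ) (i i' j : Fin n) (hv : (KingPos.both i j).valid)
    (hv' : (KingPos.both i' j).valid), i.val = i'.val + d →
    (j.val < i'.val ∨ i.val < j.val) →
    StepsTo (kingR n) d ⟨.both i j, hv⟩ ⟨.both i' j, hv'⟩ := by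
  intro d
  induction d with
  | zero =>
    intro i i' j hv hv' he _
    have : i = i' := Fin.ext (by omega)
    subst this; rfl
  | succ d ih =>
    intro i i' j hv hv' he hside
    have hi := i.isLt
    have hvj : i.val ≠ j.val := fun h => hv (Fin.ext h)
    have hvj' : i'.val ≠ j.val := fun h => hv' (Fin.ext h)
    have hx : ((⟨i.val - 1, by omega⟩ : Fin n)) ≠ j := by
      intro h
      have := congrArg Fin.val h
      simp at this; omega
    refine ⟨⟨.both ⟨i.val - 1, by omega⟩ j, hx⟩,
      Or.inl ⟨Or.inr (by show (i.val - 1) + 1 = i.val; omega), rfl, hx⟩, ?_⟩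
    refine ih _ i' j hx hv' (by show i.val - 1 = i'.val + d; omega) (by
      rcases hside with h | h
      · exact Or.inl h
      · exact Or.inr (by show i.val - 1 < j.val; omega))

lemma walkB_k_up : ∀ (d : ℕ) (i j j' : Fin n) (hv : (KingPos.both i j).valid)
    (hv' : (KingPos.both i j').valid), j.val + d = j'.val →
    (j'.val < i.val ∨ i.val < j.val) →
    StepsTo (kingR n) d ⟨.both i j, hv⟩ ⟨.both i j', hv'⟩ := by
  intro d
  induction d with
  | zero =>
    intro i j j' hv hv' he _
    have : j = j' := Fin.ext (by omega)
    subst this; rfl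
  | succ d ih =>
    intro i j j' hv hv' he hside
    have hj' := j'.isLt
    have hvj : i.val ≠ j.val := fun h => hv (Fin.ext h)
    have hvj' : i.val ≠ j'.val := fun h => hv' (Fin.ext h)
    have hx : ((⟨j.val + 1, by omega⟩ : Fin n)) ≠ i := by
      intro h
      have := congrArg Fin.val h
      simp at this; omega
    refine ⟨⟨.both i ⟨j.val + 1, by omega⟩, fun h => hx (Fin.ext (congrArg Fin.val h).symm)⟩,
      Or.inr ⟨rfl, Or.inl rfl, hx⟩, ?_⟩
    refine ih i _ j' _ hv' (by show j.val + 1 + d = j'.val; omega) (by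
      rcases hside with h | h
      · exact Or.inl h
      · exact Or.inr (by show i.val < j.val + 1; omega))

lemma walkB_k_down : ∀ (d : ℕ) (i j j' : Fin n) (hv : (KingPos.both i j).valid)
    (hv' : (KingPos.both i j').valid), j.val = j'.val + d →
    (i.val < j'.val ∨ j.val < i.val) →
    StepsTo (kingR n) d ⟨.both i j, hv⟩ ⟨.both i j', hv'⟩ := by
  intro d
  induction d with
  | zero =>
    intro i j j' hv hv' he _
    have : j = j' := Fin.ext (by omega)
    subst this; rfl
  | succ d ih =>
    intro i j j' hv hv' he hside
    have hj := j.isLt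
    have hvj : i.val ≠ j.val := fun h => hv (Fin.ext h)
    have hvj' : i.val ≠ j'.val := fun h => hv' (Fin.ext h)
    have hx : ((⟨j.val - 1, by omega⟩ : Fin n)) ≠ i := by
      intro h
      have := congrArg Fin.val h
      simp at this; omega
    refine ⟨⟨.both i ⟨j.val - 1, by omega⟩, fun h => hx (Fin.ext (congrArg Fin.val h).symm)⟩,
      Or.inr ⟨rfl, Or.inr (by show (j.val - 1) + 1 = j.val; omega), hx⟩, ?_⟩
    refine ih i _ j' _ hv' (by show j.val - 1 = j'.val + d; omega) (by
      rcases hside with h | h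
      · exact Or.inl h
      · exact Or.inr (by show j.val - 1 < i.val; omega))

end KingAux


namespace KingAux
section dists
variable {n : ℕ}

def S1 (hn : 4 ≤ n) : KingV n := ⟨.onlyK ⟨0, Nat.lt_of_lt_of_le (by norm_num) hn⟩, trivial⟩
def S2 (hn : 4 ≤ n) : KingV n :=
  ⟨.both ⟨0, Nat.lt_of_lt_of_le (by norm_num) hn⟩ ⟨1, Nat.lt_of_lt_of_le (by norm_num) hn⟩, fun h => by simpa using congrArg Fin.val h⟩
def S3 (hn : 4 ≤ n) : KingV n :=
  ⟨.both ⟨1, Nat.lt_of_lt_of_le (by norm_num) hn⟩ ⟨0, Nat.lt_of_lt_of_le (by norm_num) hn⟩, fun h => by simpa using congrArg Fin.val h⟩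

lemma dd_S1_K (hn : 4 ≤ n) (i : Fin n) :
    ddist (kingR n) (S1 hn) ⟨.onlyK i, trivial⟩ = (i.val : ℕ∞) := by
  refine le_antisymm (ddist_le (walkK_up i.val ⟨0, by omega⟩ i
    (by show 0 + i.val = i.val; omega))) ?_
  have h := forward_bound (R := kingR n) (fun u => p1f u.1) p1f_move
    (u := S1 hn) (v := ⟨.onlyK i, trivial⟩) (by simp [S1, p1f])
  simpa [p1f] using h

lemma dd_K_S1 (hn : 4 ≤ n) (i : Fin n) :
    ddist (kingR n) ⟨.onlyK i, trivial⟩ (S1 hn) = (i.val : ℕ∞) := by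
  refine le_antisymm (ddist_le (walkK_down i.val i ⟨0, by omega⟩
    (by show i.val = 0 + i.val; omega))) ?_
  have h := back_bound (R := kingR n) (fun u => p1b u.1) p1b_move
    (u := ⟨.onlyK i, trivial⟩) (v := S1 hn) (by simp [S1, p1b])
  simpa [p1b] using h

lemma dd_S1_k_top (hn : 4 ≤ n) (j : Fin n) :
    ddist (kingR n) (S1 hn) ⟨.onlyk j, trivial⟩ = ⊤ :=
  ddist_top_fwd (fun u => p1f u.1) p1f_move (by simp [S1, p1f]) (by simp [p1f])

lemma dd_k_S1_top (hn : 4 ≤ n) (j : Fin n) :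
    ddist (kingR n) ⟨.onlyk j, trivial⟩ (S1 hn) = ⊤ :=
  ddist_top_back (fun u => p1b u.1) p1b_move (by simp [p1b]) (by simp [S1, p1b])

lemma dd_S1_b_top (hn : 4 ≤ n) (i j : Fin n) (hv : (KingPos.both i j).valid) :
    ddist (kingR n) (S1 hn) ⟨.both i j, hv⟩ = ⊤ :=
  ddist_top_fwd (fun u => p1f u.1) p1f_move (by simp [S1, p1f]) (by simp [p1f])

lemma dd_b_S1_lt (hn : 4 ≤ n) (i j : Fin n) (hv : (KingPos.both i j).valid)
    (hij : i.val < j.val) :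
    ddist (kingR n) ⟨.both i j, hv⟩ (S1 hn) = ((j.val + 1 : ℕ) : ℕ∞) := by
  have hjn := j.isLt
  have hvx : (KingPos.both i (⟨i.val + 1, by omega⟩ : Fin n)).valid := by
    intro h; have := congrArg Fin.val h; simp at this; try omega
  have t1 : StepsTo (kingR n) (j.val - i.val - 1) ⟨.both i j, hv⟩
      ⟨.both i ⟨i.val + 1, by omega⟩, hvx⟩ :=
    walkB_k_down (j.val - i.val - 1) i j ⟨i.val + 1, by omega⟩ hv hvx
      (by show j.val = i.val + 1 + (j.val - i.val - 1); omega)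
      (Or.inl (by show i.val < i.val + 1; omega))
  have t2 : StepsTo (kingR n) 1 (⟨.both i ⟨i.val + 1, by omega⟩, hvx⟩ : KingV n)
      ⟨.onlyK ⟨i.val + 1, by omega⟩, trivial⟩ :=
    stepsTo_one ⟨Or.inl rfl, rfl⟩
  have t3 : StepsTo (kingR n) (i.val + 1) (⟨.onlyK ⟨i.val + 1, by omega⟩, trivial⟩ : KingV n)
      (S1 hn) := walkK_down (i.val + 1) ⟨i.val + 1, by omega⟩ ⟨0, by omega⟩
      (by show i.val + 1 = 0 + (i.val + 1); omega)
  refine le_antisymm (ddist_le (stepsTo_congr (stepsTo_trans t1 (stepsTo_trans t2 t3))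
    (by omega))) ?_
  have h := back_bound (R := kingR n) (fun u => p1b u.1) p1b_move
    (u := ⟨.both i j, hv⟩) (v := S1 hn) (by simp [S1, p1b])
  simpa [p1b, hij] using h

lemma dd_b_S1_gt (hn : 4 ≤ n) (i j : Fin n) (hv : (KingPos.both i j).valid)
    (hji : j.val < i.val) :
    ddist (kingR n) ⟨.both i j, hv⟩ (S1 hn) = (i.val : ℕ∞) := by
  have hin := i.isLt
  have hvx : (KingPos.both (⟨j.val + 1, by omega⟩ : Fin n) j).valid := by
    intro h; have := congrArg Fin.val h; simp at this; try omega
  have t1 : StepsTo (kingR n) (i.val - j.val - 1) ⟨.both i j, hv⟩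
      ⟨.both ⟨j.val + 1, by omega⟩ j, hvx⟩ :=
    walkB_K_down (i.val - j.val - 1) i ⟨j.val + 1, by omega⟩ j hv hvx
      (by show i.val = j.val + 1 + (i.val - j.val - 1); omega)
      (Or.inl (by show j.val < j.val + 1; omega))
  have t2 : StepsTo (kingR n) 1 (⟨.both ⟨j.val + 1, by omega⟩ j, hvx⟩ : KingV n)
      ⟨.onlyK j, trivial⟩ :=
    stepsTo_one ⟨Or.inr rfl, rfl⟩
  have t3 : StepsTo (kingR n) j.val (⟨.onlyK j, trivial⟩ : KingV n) (S1 hn) :=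
    walkK_down j.val j ⟨0, by omega⟩ (by show j.val = 0 + j.val; omega)
  refine le_antisymm (ddist_le (stepsTo_congr (stepsTo_trans t1 (stepsTo_trans t2 t3))
    (by omega))) ?_
  have h := back_bound (R := kingR n) (fun u => p1b u.1) p1b_move
    (u := ⟨.both i j, hv⟩) (v := S1 hn) (by simp [S1, p1b])
  have hnlt : ¬ (i.val < j.val) := by omega
  simpa [p1b, hnlt] using h

lemma dd_S2_k (hn : 4 ≤ n) (j : Fin n) :
    ddist (kingR n) (S2 hn) ⟨.onlyk j, trivial⟩ = ((j.val + 1 : ℕ) : ℕ∞) := by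
  have t1 : StepsTo (kingR n) 1 (S2 hn) (⟨.onlyk ⟨0, by omega⟩, trivial⟩ : KingV n) :=
    stepsTo_one ⟨Or.inl rfl, rfl⟩
  have t2 : StepsTo (kingR n) j.val (⟨.onlyk ⟨0, by omega⟩, trivial⟩ : KingV n)
      ⟨.onlyk j, trivial⟩ :=
    walkk_up j.val ⟨0, by omega⟩ j (by show 0 + j.val = j.val; omega)
  refine le_antisymm (ddist_le (stepsTo_congr (stepsTo_trans t1 t2) (by omega))) ?_
  have h := forward_bound (R := kingR n) (fun u => p2f u.1) p2f_move
    (u := S2 hn) (v := ⟨.onlyk j, trivial⟩) (by simp [S2, p2f])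
  simpa [p2f] using h

lemma dd_k_S2_top (hn : 4 ≤ n) (j : Fin n) :
    ddist (kingR n) ⟨.onlyk j, trivial⟩ (S2 hn) = ⊤ :=
  ddist_top_back (fun u => p2b u.1) p2b_move (by simp [p2b]) (by simp [S2, p2b])

lemma dd_S2_b_lt (hn : 4 ≤ n) (i j : Fin n) (hv : (KingPos.both i j).valid)
    (hij : i.val < j.val) :
    ddist (kingR n) (S2 hn) ⟨.both i j, hv⟩ = ((i.val + j.val - 1 : ℕ) : ℕ∞) := by
  have hjn := j.isLt
  have hvx : (KingPos.both (⟨0, by omega⟩ : Fin n) j).valid := by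
    intro h; have := congrArg Fin.val h; simp at this; try omega
  have t1 : StepsTo (kingR n) (j.val - 1) (S2 hn) ⟨.both ⟨0, by omega⟩ j, hvx⟩ :=
    walkB_k_up (j.val - 1) ⟨0, by omega⟩ ⟨1, by omega⟩ j (S2 hn).2 hvx
      (by show 1 + (j.val - 1) = j.val; omega)
      (Or.inr (by show (0:ℕ) < 1; omega))
  have t2 : StepsTo (kingR n) i.val (⟨.both ⟨0, by omega⟩ j, hvx⟩ : KingV n)
      ⟨.both i j, hv⟩ :=
    walkB_K_up i.val ⟨0, by omega⟩ i j hvx hv (by show 0 + i.val = i.val; omega)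
      (Or.inl hij)
  refine le_antisymm (ddist_le (stepsTo_congr (stepsTo_trans t1 t2) (by omega))) ?_
  have h := forward_bound (R := kingR n) (fun u => p2f u.1) p2f_move
    (u := S2 hn) (v := ⟨.both i j, hv⟩) (by simp [S2, p2f])
  simpa [p2f, hij] using h

lemma dd_b_S2_lt (hn : 4 ≤ n) (i j : Fin n) (hv : (KingPos.both i j).valid)
    (hij : i.val < j.val) :
    ddist (kingR n) ⟨.both i j, hv⟩ (S2 hn) = ((i.val + j.val - 1 : ℕ) : ℕ∞) := by
  have hjn := j.isLt
  have hvx : (KingPos.both (⟨0, by omega⟩ : Fin n) j).valid := by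
    intro h; have := congrArg Fin.val h; simp at this; try omega
  have t1 : StepsTo (kingR n) i.val (⟨.both i j, hv⟩ : KingV n)
      ⟨.both ⟨0, by omega⟩ j, hvx⟩ :=
    walkB_K_down i.val i ⟨0, by omega⟩ j hv hvx (by show i.val = 0 + i.val; omega)
      (Or.inr hij)
  have t2 : StepsTo (kingR n) (j.val - 1) (⟨.both ⟨0, by omega⟩ j, hvx⟩ : KingV n)
      (S2 hn) :=
    walkB_k_down (j.val - 1) ⟨0, by omega⟩ j ⟨1, by omega⟩ hvx (S2 hn).2
      (by show j.val = 1 + (j.val - 1); omega)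
      (Or.inl (by show (0:ℕ) < 1; omega))
  refine le_antisymm (ddist_le (stepsTo_congr (stepsTo_trans t1 t2) (by omega))) ?_
  have h := back_bound (R := kingR n) (fun u => p2b u.1) p2b_move
    (u := ⟨.both i j, hv⟩) (v := S2 hn) (by simp [S2, p2b])
  simpa [p2b, hij] using h

lemma dd_S2_b_gt_top (hn : 4 ≤ n) (i j : Fin n) (hv : (KingPos.both i j).valid)
    (hji : j.val < i.val) :
    ddist (kingR n) (S2 hn) ⟨.both i j, hv⟩ = ⊤ :=
  ddist_top_fwd (fun u => p2f u.1) p2f_move (by simp [S2, p2f])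
    (by simp only [p2f]; rw [if_neg (by omega)])

lemma dd_b_S2_gt_top (hn : 4 ≤ n) (i j : Fin n) (hv : (KingPos.both i j).valid)
    (hji : j.val < i.val) :
    ddist (kingR n) ⟨.both i j, hv⟩ (S2 hn) = ⊤ :=
  ddist_top_back (fun u => p2b u.1) p2b_move
    (by simp only [p2b]; rw [if_neg (by omega)]) (by simp [S2, p2b])

lemma dd_S3_b_gt (hn : 4 ≤ n) (i j : Fin n) (hv : (KingPos.both i j).valid)
    (hji : j.val < i.val) :
    ddist (kingR n) (S3 hn) ⟨.both i j, hv⟩ = ((i.val + j.val - 1 : ℕ) : ℕ∞) := by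
  have hin := i.isLt
  have hvx : (KingPos.both i (⟨0, by omega⟩ : Fin n)).valid := by
    intro h; have := congrArg Fin.val h; simp at this; try omega
  have t1 : StepsTo (kingR n) (i.val - 1) (S3 hn) ⟨.both i ⟨0, by omega⟩, hvx⟩ :=
    walkB_K_up (i.val - 1) ⟨1, by omega⟩ i ⟨0, by omega⟩ (S3 hn).2 hvx
      (by show 1 + (i.val - 1) = i.val; omega)
      (Or.inr (by show (0:ℕ) < 1; omega))
  have t2 : StepsTo (kingR n) j.val (⟨.both i ⟨0, by omega⟩, hvx⟩ : KingV n)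
      ⟨.both i j, hv⟩ :=
    walkB_k_up j.val i ⟨0, by omega⟩ j hvx hv (by show 0 + j.val = j.val; omega)
      (Or.inl hji)
  refine le_antisymm (ddist_le (stepsTo_congr (stepsTo_trans t1 t2) (by omega))) ?_
  have h := forward_bound (R := kingR n) (fun u => p3f u.1) p3f_move
    (u := S3 hn) (v := ⟨.both i j, hv⟩) (by simp [S3, p3f])
  simpa [p3f, hji] using h

lemma dd_b_S3_gt (hn : 4 ≤ n) (i j : Fin n) (hv : (KingPos.both i j).valid)
    (hji : j.val < i.val) :
    ddist (kingR n) ⟨.both i j, hv⟩ (S3 hn) = ((i.val + j.val - 1 : ℕ) : ℕ∞) := by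
  have hin := i.isLt
  have hvx : (KingPos.both i (⟨0, by omega⟩ : Fin n)).valid := by
    intro h; have := congrArg Fin.val h; simp at this; try omega
  have t1 : StepsTo (kingR n) j.val (⟨.both i j, hv⟩ : KingV n)
      ⟨.both i ⟨0, by omega⟩, hvx⟩ :=
    walkB_k_down j.val i j ⟨0, by omega⟩ hv hvx (by show j.val = 0 + j.val; omega)
      (Or.inr hji)
  have t2 : StepsTo (kingR n) (i.val - 1) (⟨.both i ⟨0, by omega⟩, hvx⟩ : KingV n)
      (S3 hn) :=
    walkB_K_down (i.val - 1) i ⟨1, by omega⟩ ⟨0, by omega⟩ hvx (S3 hn).2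
      (by show i.val = 1 + (i.val - 1); omega)
      (Or.inl (by show (0:ℕ) < 1; omega))
  refine le_antisymm (ddist_le (stepsTo_congr (stepsTo_trans t1 t2) (by omega))) ?_
  have h := back_bound (R := kingR n) (fun u => p3b u.1) p3b_move
    (u := ⟨.both i j, hv⟩) (v := S3 hn) (by simp [S3, p3b])
  simpa [p3b, hji] using h

lemma dd_S3_b_lt_top (hn : 4 ≤ n) (i j : Fin n) (hv : (KingPos.both i j).valid)
    (hij : i.val < j.val) :
    ddist (kingR n) (S3 hn) ⟨.both i j, hv⟩ = ⊤ :=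
  ddist_top_fwd (fun u => p3f u.1) p3f_move (by simp [S3, p3f])
    (by simp only [p3f]; rw [if_neg (by omega)])

lemma dd_b_S3_lt_top (hn : 4 ≤ n) (i j : Fin n) (hv : (KingPos.both i j).valid)
    (hij : i.val < j.val) :
    ddist (kingR n) ⟨.both i j, hv⟩ (S3 hn) = ⊤ :=
  ddist_top_back (fun u => p3b u.1) p3b_move
    (by simp only [p3b]; rw [if_neg (by omega)]) (by simp [S3, p3b])

end dists
end KingAux


namespace KingAux
section sd
variable {n : ℕ}

lemma sd_S1_K (hn : 4 ≤ n) (i : Fin n) :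
    sdist (kingR n) (S1 hn) ⟨.onlyK i, trivial⟩ = ((i.val : ℤ) : WithTop ℤ) :=
  sdist_coe' (dd_S1_K hn i) (le_of_eq (dd_K_S1 hn i).symm)

lemma sd_S1_k (hn : 4 ≤ n) (j : Fin n) :
    sdist (kingR n) (S1 hn) ⟨.onlyk j, trivial⟩ = ⊤ :=
  sdist_top' (dd_S1_k_top hn j) (dd_k_S1_top hn j)

lemma sd_S1_b_lt (hn : 4 ≤ n) (i j : Fin n) (hv : (KingPos.both i j).valid)
    (hij : i.val < j.val) :
    sdist (kingR n) (S1 hn) ⟨.both i j, hv⟩ = ((-((j.val + 1 : ℕ) : ℤ) : ℤ) : WithTop ℤ) :=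
  sdist_neg' (dd_S1_b_top hn i j hv) (dd_b_S1_lt hn i j hv hij)

lemma sd_S1_b_gt (hn : 4 ≤ n) (i j : Fin n) (hv : (KingPos.both i j).valid)
    (hji : j.val < i.val) :
    sdist (kingR n) (S1 hn) ⟨.both i j, hv⟩ = ((-((i.val : ℕ) : ℤ) : ℤ) : WithTop ℤ) :=
  sdist_neg' (dd_S1_b_top hn i j hv) (dd_b_S1_gt hn i j hv hji)

lemma sd_S2_k (hn : 4 ≤ n) (j : Fin n) :
    sdist (kingR n) (S2 hn) ⟨.onlyk j, trivial⟩ = (((j.val + 1 : ℕ) : ℤ) : WithTop ℤ) :=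
  sdist_coe' (dd_S2_k hn j) (by rw [dd_k_S2_top hn j]; exact le_top)

lemma sd_S2_b_lt (hn : 4 ≤ n) (i j : Fin n) (hv : (KingPos.both i j).valid)
    (hij : i.val < j.val) :
    sdist (kingR n) (S2 hn) ⟨.both i j, hv⟩ = (((i.val + j.val - 1 : ℕ) : ℤ) : WithTop ℤ) :=
  sdist_coe' (dd_S2_b_lt hn i j hv hij) (le_of_eq (dd_b_S2_lt hn i j hv hij).symm)

lemma sd_S2_b_gt (hn : 4 ≤ n) (i j : Fin n) (hv : (KingPos.both i j).valid)
    (hji : j.val < i.val) :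
    sdist (kingR n) (S2 hn) ⟨.both i j, hv⟩ = ⊤ :=
  sdist_top' (dd_S2_b_gt_top hn i j hv hji) (dd_b_S2_gt_top hn i j hv hji)

lemma sd_S3_b_gt (hn : 4 ≤ n) (i j : Fin n) (hv : (KingPos.both i j).valid)
    (hji : j.val < i.val) :
    sdist (kingR n) (S3 hn) ⟨.both i j, hv⟩ = (((i.val + j.val - 1 : ℕ) : ℤ) : WithTop ℤ) :=
  sdist_coe' (dd_S3_b_gt hn i j hv hji) (le_of_eq (dd_b_S3_gt hn i j hv hji).symm)

lemma sd_S3_b_lt (hn : 4 ≤ n) (i j : Fin n) (hv : (KingPos.both i j).valid)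
    (hij : i.val < j.val) :
    sdist (kingR n) (S3 hn) ⟨.both i j, hv⟩ = ⊤ :=
  sdist_top' (dd_S3_b_lt_top hn i j hv hij) (dd_b_S3_lt_top hn i j hv hij)

end sd
end KingAux

open KingAux

/-- for every `n ≥ 4`, the set `{K₁, K₁k₂, K₂k₁}` (the single white king
on square 1, and the two two-king positions with the kings on squares 1 and 2) resolves
`G(K(1,n))` with respect to signed distance. -/
theorem stmt19 (n : ℕ) (hn : 4 ≤ n) :
    Resolves (kingR n)
      {(⟨KingPos.onlyK ⟨0, by omega⟩, trivial⟩ : KingV n),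
       ⟨KingPos.both ⟨0, by omega⟩ ⟨1, by omega⟩, by simp [KingPos.valid, Fin.ext_iff]⟩,
       ⟨KingPos.both ⟨1, by omega⟩ ⟨0, by omega⟩, by simp [KingPos.valid, Fin.ext_iff]⟩} := by
  intro u v hsd
  have h1 := hsd (S1 hn) (Set.mem_insert _ _)
  have h2 := hsd (S2 hn) (Set.mem_insert_of_mem _ (Set.mem_insert _ _))
  have h3 := hsd (S3 hn) (Set.mem_insert_of_mem _ (Set.mem_insert_of_mem _ rfl))
  clear hsd
  obtain ⟨pu, hu⟩ := u
  obtain ⟨pv, hv⟩ := v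
  cases pu with
  | both i j =>
    have hne : i.val ≠ j.val := fun h => hu (Fin.ext h)
    cases pv with
    | both i' j' =>
      have hne' : i'.val ≠ j'.val := fun h => hv (Fin.ext h)
      rcases hne.lt_or_gt with hij | hji
      · rcases hne'.lt_or_gt with hij' | hji'
        · rw [sd_S1_b_lt hn i j hu hij, sd_S1_b_lt hn i' j' hv hij'] at h1
          rw [sd_S2_b_lt hn i j hu hij, sd_S2_b_lt hn i' j' hv hij'] at h2
          have e1 : (-((j.val + 1 : ℕ) : ℤ)) = (-((j'.val + 1 : ℕ) : ℤ)) := by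
            exact_mod_cast h1
          have e2 : ((i.val + j.val - 1 : ℕ) : ℤ) = ((i'.val + j'.val - 1 : ℕ) : ℤ) := by
            exact_mod_cast h2
          have : i = i' := Fin.ext (by omega)
          subst this
          have : j = j' := Fin.ext (by omega)
          subst this
          rfl
        · rw [sd_S2_b_lt hn i j hu hij, sd_S2_b_gt hn i' j' hv hji'] at h2
          exact absurd h2 (by simp)
      · rcases hne'.lt_or_gt with hij' | hji'
        · rw [sd_S2_b_gt hn i j hu hji, sd_S2_b_lt hn i' j' hv hij'] at h2
          exact absurd h2.symm (by simp)
        · rw [sd_S1_b_gt hn i j hu hji, sd_S1_b_gt hn i' j' hv hji'] at h1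
          rw [sd_S3_b_gt hn i j hu hji, sd_S3_b_gt hn i' j' hv hji'] at h3
          have e1 : (-((i.val : ℕ) : ℤ)) = (-((i'.val : ℕ) : ℤ)) := by exact_mod_cast h1
          have e3 : ((i.val + j.val - 1 : ℕ) : ℤ) = ((i'.val + j'.val - 1 : ℕ) : ℤ) := by
            exact_mod_cast h3
          have : i = i' := Fin.ext (by omega)
          subst this
          have : j = j' := Fin.ext (by omega)
          subst this
          rfl
    | onlyK b =>
      rcases hne.lt_or_gt with hij | hji
      · rw [sd_S1_b_lt hn i j hu hij, sd_S1_K hn b] at h1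
        have e1 : (-((j.val + 1 : ℕ) : ℤ)) = ((b.val : ℕ) : ℤ) := by exact_mod_cast h1
        exact absurd e1 (by omega)
      · rw [sd_S1_b_gt hn i j hu hji, sd_S1_K hn b] at h1
        have e1 : (-((i.val : ℕ) : ℤ)) = ((b.val : ℕ) : ℤ) := by exact_mod_cast h1
        exact absurd e1 (by omega)
    | onlyk b =>
      rcases hne.lt_or_gt with hij | hji
      · rw [sd_S1_b_lt hn i j hu hij, sd_S1_k hn b] at h1
        exact absurd h1 (by simp)
      · rw [sd_S1_b_gt hn i j hu hji, sd_S1_k hn b] at h1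
        exact absurd h1 (by simp)
  | onlyK a =>
    cases pv with
    | both i' j' =>
      have hne' : i'.val ≠ j'.val := fun h => hv (Fin.ext h)
      rcases hne'.lt_or_gt with hij' | hji'
      · rw [sd_S1_K hn a, sd_S1_b_lt hn i' j' hv hij'] at h1
        have e1 : ((a.val : ℕ) : ℤ) = (-((j'.val + 1 : ℕ) : ℤ)) := by exact_mod_cast h1
        exact absurd e1 (by omega)
      · rw [sd_S1_K hn a, sd_S1_b_gt hn i' j' hv hji'] at h1
        have e1 : ((a.val : ℕ) : ℤ) = (-((i'.val : ℕ) : ℤ)) := by exact_mod_cast h1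
        exact absurd e1 (by omega)
    | onlyK b =>
      rw [sd_S1_K hn a, sd_S1_K hn b] at h1
      have e1 : ((a.val : ℕ) : ℤ) = ((b.val : ℕ) : ℤ) := by exact_mod_cast h1
      have : a = b := Fin.ext (by omega)
      subst this
      rfl
    | onlyk b =>
      rw [sd_S1_K hn a, sd_S1_k hn b] at h1
      exact absurd h1 (by simp)
  | onlyk a =>
    cases pv with
    | both i' j' =>
      have hne' : i'.val ≠ j'.val := fun h => hv (Fin.ext h)
      rcases hne'.lt_or_gt with hij' | hji'
      · rw [sd_S1_k hn a, sd_S1_b_lt hn i' j' hv hij'] at h1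
        exact absurd h1.symm (by simp)
      · rw [sd_S1_k hn a, sd_S1_b_gt hn i' j' hv hji'] at h1
        exact absurd h1.symm (by simp)
    | onlyK b =>
      rw [sd_S1_k hn a, sd_S1_K hn b] at h1
      exact absurd h1.symm (by simp)
    | onlyk b =>
      rw [sd_S2_k hn a, sd_S2_k hn b] at h2
      have e2 : ((a.val + 1 : ℕ) : ℤ) = ((b.val + 1 : ℕ) : ℤ) := by exact_mod_cast h2
      have : a = b := Fin.ext (by omega)
      subst this
      rfl
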